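/- If the tiling puzzle G is solvable, then Γ_G ⊢ start is intuitionistically derivable. -/

import Mathlib

set_option autoImplicit false

/-- Formulas of first-order intuitionistic logic over `→` and `∀` only. -/
inductive Fml : Type
  | atom : ℕ → List ℕ → Fml
  | imp : Fml → Fml → Fml
  | all : ℕ → Fml → Fml
deriving DecidableEq

namespace Fml

def fv : Fml → List ℕ
  | atom _ args => args
  | imp φ ψ => fv φ ++ fv ψ
  | all x φ => (fv φ).filter (fun y => y != x)

def rename (σ : ℕ → ℕ) : Fml → Fml
  | atom r args => atom r (args.map σ)
  | imp φ ψ => imp (rename σ φ) (rename σ ψ)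
  | all x φ => all x (rename (Function.update σ x x) φ)

def substV (φ : Fml) (x y : ℕ) : Fml := rename (Function.update id x y) φ

end Fml

def fvCtx (Γ : List Fml) : List ℕ := Γ.flatMap Fml.fv

/-- Intuitionistic provability (natural deduction) for the `(∀,→)` fragment. -/
inductive Prov : List Fml → Fml → Prop
  | ax {Γ φ} : φ ∈ Γ → Prov Γ φ
  | impI {Γ φ ψ} : Prov (φ :: Γ) ψ → Prov Γ (.imp φ ψ)
  | impE {Γ φ ψ} : Prov Γ (.imp φ ψ) → Prov Γ φ → Prov Γ ψ
  | allI {Γ x φ} : x ∉ fvCtx Γ → Prov Γ φ → Prov Γ (.all x φ)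
  | allE {Γ x φ} (y : ℕ) : Prov Γ (.all x φ) → Prov Γ (φ.substV x y)


/-- A deterministic tiling puzzle, with tiles `Fin k`. -/
structure Puzzle where
  k : ℕ
  R : Fin k → Fin k → Fin k → Fin k → Fin k
  E : Fin k
  ok : Fin k
  hEok : E ≠ ok

/-- The tiling determined by the puzzle. -/
def Puzzle.tiling (G : Puzzle) : ℕ → ℕ → Fin G.k
  | _, 0 => G.E
  | 0, _ + 1 => G.E
  | m + 1, n + 1 =>
      G.R (G.tiling m (n + 1)) (G.tiling m n) (G.tiling (m + 1) n) (G.tiling (m + 2) n)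
  termination_by m n => (n, m)

/-- `G` is solvable when the tile `ok` appears somewhere in `T_G`. -/
def Puzzle.Solvable (G : Puzzle) : Prop := ∃ m n : ℕ, G.tiling m n = G.ok

/-! The signature of `Γ_G`.  Relation symbols: `start` is `0`, `lupa` is `1`,
`pula` is `2`, `A` is `3`, `B` is `4`, `H` is `5`, `V` is `6`, and each tile
`t` gets the unary symbol `7 + t`. -/

def aStart : Fml := .atom 0 []
def aLupa : Fml := .atom 1 []
def aPula (x : ℕ) : Fml := .atom 2 [x]
def aA (x : ℕ) : Fml := .atom 3 [x]
def aB (x : ℕ) : Fml := .atom 4 [x]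
def aH (x y : ℕ) : Fml := .atom 5 [x, y]
def aV (x y : ℕ) : Fml := .atom 6 [x, y]
def aTile (G : Puzzle) (t : Fin G.k) (x : ℕ) : Fml := .atom (7 + (t : ℕ)) [x]

/-- `foralls [x₁,…,xₙ] φ = ∀x₁ … ∀xₙ φ`. -/
def foralls (vs : List ℕ) (φ : Fml) : Fml := vs.foldr .all φ

/-- `imps [φ₁,…,φₙ] ψ = φ₁ → ⋯ → φₙ → ψ`. -/
def imps (hs : List Fml) (ψ : Fml) : Fml := hs.foldr .imp ψ

/-- Formula (0), for a rule `R(K,L,M,N) = T`; the quantified variables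
`x y z u v` are `0 1 2 3 4`:
`∀xyzuv[K(y)→L(z)→M(u)→N(v)→V(z,y)→H(z,u)→H(u,v)→
        (T(x)→H(y,x)→V(u,x)→lupa)→pula(x)]`. -/
def fml0 (G : Puzzle) (K L M N : Fin G.k) : Fml :=
  foralls [0, 1, 2, 3, 4] <|
    imps [aTile G K 1, aTile G L 2, aTile G M 3, aTile G N 4,
          aV 2 1, aH 2 3, aH 3 4,
          imps [aTile G (G.R K L M N) 0, aH 1 0, aV 3 0] aLupa]
      (aPula 0)

/-- Formula (1): `∀x(E(x)→A(x)→B(x)→lupa) → start`. -/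
def fml1 (G : Puzzle) : Fml :=
  .imp (.all 0 (imps [aTile G G.E 0, aA 0, aB 0] aLupa)) aStart

/-- Formula (2): `∀x∀y(E(y)→A(y)→(H(y,x)→E(x)→A(x)→lupa)→pula(x))`. -/
def fml2 (G : Puzzle) : Fml :=
  foralls [0, 1] <|
    imps [aTile G G.E 1, aA 1, imps [aH 1 0, aTile G G.E 0, aA 0] aLupa] (aPula 0)

/-- Formula (3): `∀x∀y(E(y)→B(y)→(V(y,x)→E(x)→B(x)→lupa)→pula(x))`. -/
def fml3 (G : Puzzle) : Fml :=
  foralls [0, 1] <|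
    imps [aTile G G.E 1, aB 1, imps [aV 1 0, aTile G G.E 0, aB 0] aLupa] (aPula 0)

/-- Formula (4): `∀x(ok(x)→lupa)`. -/
def fml4 (G : Puzzle) : Fml := .all 0 (.imp (aTile G G.ok 0) aLupa)

/-- Formula (5): `∀x pula(x) → lupa`. -/
def fml5 : Fml := .imp (.all 0 (aPula 0)) aLupa

/-- The environment `Γ_G`: formulas (1)–(5) together with an instance of
formula (0) for every rule `R(K,L,M,N) = T` of the puzzle. -/
def GammaG (G : Puzzle) : List Fml :=
  [fml1 G, fml2 G, fml3 G, fml4 G, fml5] ++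
    ((List.finRange G.k).flatMap fun K =>
      (List.finRange G.k).flatMap fun L =>
        (List.finRange G.k).flatMap fun M =>
          (List.finRange G.k).map fun N => fml0 G K L M N)

/-!
A derivation of `start` is a strategy that builds the tiling one cell at a time. Formula (1)
introduces a fresh element for the origin satisfying `E`, `A`, `B`, and from then on the goal is
always `lupa`. Formula (5) reduces `lupa` to `pula x` for a fresh `x`, and one of (0), (2), (3)
turns that into `lupa` again under new hypotheses: `x` is the element of a new cell, carrying the
tile forced by `R` and its `H`/`V` links to the neighbours. Adding the cells `(m, n)` in order of
`m + 2n`, the neighbours a rule needs are always present, so the cell holding `ok` is reached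
after finitely many steps and (4) closes the derivation.
-/

namespace Fml

def IsQuantifierFree : Fml → Prop
  | atom _ _ => True
  | imp φ ψ => φ.IsQuantifierFree ∧ ψ.IsQuantifierFree
  | all _ _ => False

theorem IsQuantifierFree.rename {φ : Fml} (hφ : φ.IsQuantifierFree) (σ : ℕ → ℕ) :
    (φ.rename σ).IsQuantifierFree := by
  induction φ with
  | atom => trivial
  | imp φ ψ ihφ ihψ => exact ⟨ihφ hφ.1, ihψ hφ.2⟩
  | all => exact hφ.elim

theorem rename_rename {φ : Fml} (hφ : φ.IsQuantifierFree) (σ τ : ℕ → ℕ) :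
    (φ.rename τ).rename σ = φ.rename (σ ∘ τ) := by
  induction φ with
  | atom r args => simp [Fml.rename]
  | imp φ ψ ihφ ihψ => simp [Fml.rename, ihφ hφ.1, ihψ hφ.2]
  | all => exact hφ.elim

theorem rename_id (φ : Fml) : φ.rename id = φ := by
  induction φ with
  | atom r args => simp [Fml.rename]
  | imp φ ψ ihφ ihψ => simp [Fml.rename, ihφ, ihψ]
  | all x φ ih =>
    rw [Fml.rename, show Function.update id x x = id from Function.update_eq_self x id, ih]

theorem rename_foralls {vs : List ℕ} {σ : ℕ → ℕ} (hσ : ∀ x ∈ vs, σ x = x)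
    (φ : Fml) :
    (foralls vs φ).rename σ = foralls vs (φ.rename σ) := by
  induction vs with
  | nil => rfl
  | cons x vs ih =>
    simp only [List.mem_cons, forall_eq_or_imp] at hσ
    simp only [foralls, List.foldr_cons, Fml.rename] at ih ⊢
    rw [Function.update_eq_self_iff.mpr hσ.1.symm, ih hσ.2]

end Fml

theorem fvCtx_append (Γ Δ : List Fml) : fvCtx (Γ ++ Δ) = fvCtx Γ ++ fvCtx Δ :=
  List.flatMap_append

namespace Prov

variable {Γ : List Fml}

theorem imps_elim {ps : List Fml} {ψ : Fml} (h : Prov Γ (imps ps ψ))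
    (hps : ∀ p ∈ ps, Prov Γ p) : Prov Γ ψ := by
  induction ps with
  | nil => exact h
  | cons p ps ih =>
    simp only [List.mem_cons, forall_eq_or_imp] at hps
    exact ih (impE h hps.1) hps.2

theorem imps_intro {ps : List Fml} {ψ : Fml} (h : Prov (ps.reverse ++ Γ) ψ) :
    Prov Γ (imps ps ψ) := by
  induction ps generalizing Γ with
  | nil => exact h
  | cons p ps ih => exact impI (ih (by simpa using h))

theorem allI_substV {φ : Fml} {x y : ℕ} (hx : x ∉ fvCtx Γ) (hy : y ∉ fvCtx Γ)
    (h : Prov Γ φ) : Prov Γ (.all y (φ.substV x y)) := by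
  have h' := allE y (allI hx (allI hy h))
  rwa [Fml.substV, Fml.rename, Function.update_eq_self_iff.mpr (by simp [Function.update_apply])]
    at h'

theorem instantiate {vs : List ℕ} {φ : Fml} {σ : ℕ → ℕ} (hvs : vs.Nodup)
    (hφ : φ.IsQuantifierFree) (hfix : ∀ z ∉ vs, σ z = z) (hσ : ∀ x ∈ vs, σ x ∉ vs)
    (h : Prov Γ (foralls vs φ)) :
    Prov Γ (φ.rename σ) := by
  induction vs generalizing φ σ with
  | nil => rwa [show σ = id from funext fun z => hfix z List.not_mem_nil, Fml.rename_id]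
  | cons x vs ih =>
    obtain ⟨hx, hvs⟩ := List.nodup_cons.mp hvs
    have hσx : σ x ∉ x :: vs := hσ x List.mem_cons_self
    have hne : ∀ y ∈ vs, y ≠ x := fun y hy h => hx (h ▸ hy)
    -- substitute `σ x` for `x` first; the rest of `σ`, which then fixes `x`, acts on `vs`
    have h' : Prov Γ (foralls vs (φ.rename (Function.update id x (σ x)))) := by
      rw [← Fml.rename_foralls fun y hy => Function.update_of_ne (hne y hy) _ _]
      exact allE (σ x) h
    have hcomp : Function.update σ x x ∘ Function.update id x (σ x) = σ := by
      funext z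
      by_cases hz : z = x
      · subst hz
        have hσz : σ z ≠ z := fun h => hσx (by simp [h])
        rw [Function.comp_apply, Function.update_self, Function.update_of_ne hσz, hfix _ hσx]
      · simp [hz]
    have hfix' : ∀ z ∉ vs, Function.update σ x x z = z := fun z hz => by
      by_cases hzx : z = x
      · simp [hzx]
      · simp [hzx, hfix z (by simp [hzx, hz])]
    have hσ' : ∀ y ∈ vs, Function.update σ x x y ∉ vs := fun y hy => by
      simpa [hne y hy] using fun h => hσ y (List.mem_cons_of_mem _ hy) (List.mem_cons_of_mem _ h)
    have := ih hvs (hφ.rename _) hfix' hσ' h'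
    rwa [Fml.rename_rename hφ, hcomp] at this

theorem instantiate_range {φ : Fml} (ys : List ℕ) (hys : ∀ y ∈ ys, ys.length ≤ y)
    (hφ : φ.IsQuantifierFree) (h : Prov Γ (foralls (List.range ys.length) φ)) :
    Prov Γ (φ.rename fun z => ys.getD z z) := by
  refine instantiate List.nodup_range hφ (fun z hz => ?_) (fun x hx => ?_) h
  · exact List.getD_eq_default _ _ (by simpa using hz)
  · have hx : x < ys.length := List.mem_range.mp hx
    rw [List.getD_eq_getElem _ _ hx, List.mem_range, not_lt]
    exact hys _ (List.getElem_mem hx)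

end Prov

namespace Puzzle

variable (G : Puzzle)

theorem tiling_zero_right (m : ℕ) : G.tiling m 0 = G.E := by
  cases m <;> rw [tiling]

theorem tiling_zero_left (n : ℕ) : G.tiling 0 n = G.E := by
  cases n <;> rw [tiling]

theorem tiling_succ_succ (m n : ℕ) :
    G.tiling (m + 1) (n + 1) =
      G.R (G.tiling m (n + 1)) (G.tiling m n) (G.tiling (m + 1) n) (G.tiling (m + 2) n) := by
  rw [tiling]

end Puzzle

section GammaG

variable {G : Puzzle}

theorem fml0_mem_gammaG (K L M N : Fin G.k) : fml0 G K L M N ∈ GammaG G := by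
  simp only [GammaG, List.mem_append, List.mem_flatMap, List.mem_map, List.mem_finRange, true_and]
  exact Or.inr ⟨K, L, M, N, rfl⟩

theorem fml1_mem_gammaG : fml1 G ∈ GammaG G := by simp [GammaG]
theorem fml2_mem_gammaG : fml2 G ∈ GammaG G := by simp [GammaG]
theorem fml3_mem_gammaG : fml3 G ∈ GammaG G := by simp [GammaG]
theorem fml4_mem_gammaG : fml4 G ∈ GammaG G := by simp [GammaG]
theorem fml5_mem_gammaG : fml5 ∈ GammaG G := by simp [GammaG]

theorem fvCtx_gammaG : fvCtx (GammaG G) = [] := by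
  refine List.flatMap_eq_nil_iff.mpr fun φ hφ => ?_
  simp only [GammaG, List.mem_append, List.mem_cons, List.mem_flatMap, List.mem_map,
    List.mem_finRange, true_and, List.not_mem_nil, or_false] at hφ
  rcases hφ with (rfl | rfl | rfl | rfl | rfl) | ⟨K, L, M, N, rfl⟩ <;> rfl

end GammaG

namespace Grid

/-- The variable standing for grid cell `c`; the variables `0, …, 4` are kept free for the
bound variables of `Γ_G`. -/
def cellVar (c : ℕ × ℕ) : ℕ := 5 + Nat.pair c.1 c.2

theorem le_cellVar {k : ℕ} (hk : k ≤ 5) (c : ℕ × ℕ) : k ≤ cellVar c :=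
  hk.trans (Nat.le_add_right _ _)

theorem cellVar_injective : Function.Injective cellVar := fun c d h => by
  have h : Nat.pair c.1 c.2 = Nat.pair d.1 d.2 := by unfold cellVar at h; omega
  obtain ⟨h1, h2⟩ := Nat.pair_eq_pair.mp h
  exact Prod.ext h1 h2

def prereq : ℕ × ℕ → List (ℕ × ℕ)
  | (0, 0) => []
  | (m + 1, 0) => [(m, 0)]
  | (0, n + 1) => [(0, n)]
  | (m + 1, n + 1) => [(m, n + 1), (m, n), (m + 1, n), (m + 2, n)]

/-- The factor `2` makes `(m + 2, n)` lighter than `(m + 1, n + 1)`. -/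
def weight (c : ℕ × ℕ) : ℕ := c.1 + 2 * c.2

theorem weight_lt_of_mem_prereq {c d : ℕ × ℕ} (h : d ∈ prereq c) : weight d < weight c := by
  obtain ⟨_ | m, _ | n⟩ := c <;>
    simp only [prereq, List.mem_cons, List.not_mem_nil, or_false] at h <;>
    rcases h with rfl | rfl | rfl | rfl <;> simp only [weight] <;> omega

def DownClosed (S : List (ℕ × ℕ)) : Prop := ∀ c ∈ S, ∀ d ∈ prereq c, d ∈ S

def layer (w : ℕ) : List (ℕ × ℕ) := (List.range (w / 2 + 1)).map fun n => (w - 2 * n, n)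

theorem mem_layer {c : ℕ × ℕ} {w : ℕ} : c ∈ layer w ↔ weight c = w := by
  obtain ⟨m, n⟩ := c
  simp only [layer, List.mem_map, List.mem_range, Prod.mk.injEq, weight]
  constructor
  · rintro ⟨n, hn, rfl, rfl⟩
    omega
  · rintro rfl
    exact ⟨n, by omega, by omega, rfl⟩

theorem nodup_layer (w : ℕ) : (layer w).Nodup :=
  List.nodup_range.map fun _ _ h => (Prod.mk.inj h).2

def cellsBelow : ℕ → List (ℕ × ℕ)
  | 0 => []
  | w + 1 => layer w ++ cellsBelow w

theorem mem_cellsBelow {c : ℕ × ℕ} {w : ℕ} : c ∈ cellsBelow w ↔ weight c < w := by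
  induction w with
  | zero => simp [cellsBelow]
  | succ w ih => rw [cellsBelow, List.mem_append, mem_layer, ih]; omega

theorem downClosed_cellsBelow (w : ℕ) : DownClosed (cellsBelow w) := fun _ hc _ hd =>
  mem_cellsBelow.mpr ((weight_lt_of_mem_prereq hd).trans (mem_cellsBelow.mp hc))

end Grid

namespace Puzzle

open Grid

variable (G : Puzzle)

/-- The atoms about the element of cell `c`: the hypotheses of the last premise of the rule of
`Γ_G` that creates it, or of the premise of formula (1) for the origin. -/
def cellAtoms : ℕ × ℕ → List Fml
  | (0, 0) => [aTile G G.E (cellVar (0, 0)), aA (cellVar (0, 0)), aB (cellVar (0, 0))]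
  | (m + 1, 0) =>
    [aH (cellVar (m, 0)) (cellVar (m + 1, 0)), aTile G G.E (cellVar (m + 1, 0)),
      aA (cellVar (m + 1, 0))]
  | (0, n + 1) =>
    [aV (cellVar (0, n)) (cellVar (0, n + 1)), aTile G G.E (cellVar (0, n + 1)),
      aB (cellVar (0, n + 1))]
  | (m + 1, n + 1) =>
    [aTile G (G.tiling (m + 1) (n + 1)) (cellVar (m + 1, n + 1)),
      aH (cellVar (m, n + 1)) (cellVar (m + 1, n + 1)),
      aV (cellVar (m + 1, n)) (cellVar (m + 1, n + 1))]

def cellPremises : ℕ × ℕ → List Fml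
  | (0, 0) => []
  | (m + 1, 0) => [aTile G G.E (cellVar (m, 0)), aA (cellVar (m, 0))]
  | (0, n + 1) => [aTile G G.E (cellVar (0, n)), aB (cellVar (0, n))]
  | (m + 1, n + 1) =>
    [aTile G (G.tiling m (n + 1)) (cellVar (m, n + 1)), aTile G (G.tiling m n) (cellVar (m, n)),
      aTile G (G.tiling (m + 1) n) (cellVar (m + 1, n)),
      aTile G (G.tiling (m + 2) n) (cellVar (m + 2, n)),
      aV (cellVar (m, n)) (cellVar (m, n + 1)), aH (cellVar (m, n)) (cellVar (m + 1, n)),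
      aH (cellVar (m + 1, n)) (cellVar (m + 2, n))]

theorem prov_cellRule {Γ : List Fml} (hΓ : GammaG G ⊆ Γ) {c : ℕ × ℕ} (hc : c ≠ (0, 0)) :
    Prov Γ (imps (G.cellPremises c ++ [imps (G.cellAtoms c) aLupa]) (aPula (cellVar c))) := by
  obtain ⟨_ | m, _ | n⟩ := c
  · exact absurd rfl hc
  · exact Prov.instantiate_range [cellVar (0, n + 1), cellVar (0, n)]
      (by simp [le_cellVar]) (by simp [Fml.IsQuantifierFree, imps, aTile, aB, aV, aLupa, aPula])
      (Prov.ax (hΓ fml3_mem_gammaG))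
  · exact Prov.instantiate_range [cellVar (m + 1, 0), cellVar (m, 0)]
      (by simp [le_cellVar]) (by simp [Fml.IsQuantifierFree, imps, aTile, aA, aH, aLupa, aPula])
      (Prov.ax (hΓ fml2_mem_gammaG))
  · have h := Prov.instantiate_range
      [cellVar (m + 1, n + 1), cellVar (m, n + 1), cellVar (m, n), cellVar (m + 1, n),
        cellVar (m + 2, n)]
      (by simp [le_cellVar]) (by simp [Fml.IsQuantifierFree, imps, aTile, aH, aV, aLupa, aPula])
      (Prov.ax (hΓ (fml0_mem_gammaG (G.tiling m (n + 1)) (G.tiling m n) (G.tiling (m + 1) n)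
        (G.tiling (m + 2) n))))
    rwa [← tiling_succ_succ] at h

theorem tile_mem_cellAtoms (c : ℕ × ℕ) :
    aTile G (G.tiling c.1 c.2) (cellVar c) ∈ G.cellAtoms c := by
  obtain ⟨_ | m, _ | n⟩ := c <;> simp [cellAtoms, tiling_zero_left, tiling_zero_right]

theorem aA_mem_cellAtoms (m : ℕ) : aA (cellVar (m, 0)) ∈ G.cellAtoms (m, 0) := by
  cases m <;> simp [cellAtoms]

theorem aB_mem_cellAtoms (n : ℕ) : aB (cellVar (0, n)) ∈ G.cellAtoms (0, n) := by
  cases n <;> simp [cellAtoms]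

theorem aH_mem_cellAtoms (m n : ℕ) :
    aH (cellVar (m, n)) (cellVar (m + 1, n)) ∈ G.cellAtoms (m + 1, n) := by
  cases n <;> simp [cellAtoms]

theorem aV_mem_cellAtoms (m n : ℕ) :
    aV (cellVar (m, n)) (cellVar (m, n + 1)) ∈ G.cellAtoms (m, n + 1) := by
  cases m <;> simp [cellAtoms]

theorem exists_prereq_of_mem_cellPremises {c : ℕ × ℕ} {p : Fml} (hp : p ∈ G.cellPremises c) :
    ∃ d ∈ prereq c, p ∈ G.cellAtoms d := by
  have hE : ∀ d : ℕ × ℕ, d.1 = 0 ∨ d.2 = 0 →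
      aTile G G.E (cellVar d) ∈ G.cellAtoms d := by
    rintro ⟨m, n⟩ (rfl | rfl)
    · simpa [tiling_zero_left] using G.tile_mem_cellAtoms (0, n)
    · simpa [tiling_zero_right] using G.tile_mem_cellAtoms (m, 0)
  obtain ⟨_ | m, _ | n⟩ := c <;>
    simp only [cellPremises, List.mem_cons, List.not_mem_nil, or_false] at hp <;>
    rcases hp with rfl | rfl | rfl | rfl | rfl | rfl | rfl <;>
    first
    | exact ⟨_, by simp [prereq], G.tile_mem_cellAtoms (_, _)⟩
    | exact ⟨_, by simp [prereq], hE _ (by simp)⟩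
    | exact ⟨_, by simp [prereq], G.aA_mem_cellAtoms _⟩
    | exact ⟨_, by simp [prereq], G.aB_mem_cellAtoms _⟩
    | exact ⟨_, by simp [prereq], G.aH_mem_cellAtoms _ _⟩
    | exact ⟨_, by simp [prereq], G.aV_mem_cellAtoms _ _⟩

theorem mem_prereq_of_mem_fvCtx_cellAtoms {c : ℕ × ℕ} {y : ℕ}
    (hy : y ∈ fvCtx (G.cellAtoms c)) : y = cellVar c ∨ ∃ d ∈ prereq c, y = cellVar d := by
  obtain ⟨_ | m, _ | n⟩ := c <;>
    simp [cellAtoms, prereq, fvCtx, aA, aB, aH, aV, aTile, Fml.fv] at hy ⊢ <;> tauto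

/-- The context reached after creating the elements of the cells `S`, latest first. -/
def cellCtx : List (ℕ × ℕ) → List Fml
  | [] => GammaG G
  | c :: S => (G.cellAtoms c).reverse ++ cellCtx S

theorem gammaG_subset_cellCtx (S : List (ℕ × ℕ)) : GammaG G ⊆ G.cellCtx S := by
  induction S with
  | nil => exact List.Subset.refl _
  | cons c S ih => exact fun _ hφ => List.mem_append_right _ (ih hφ)

theorem mem_cellCtx {S : List (ℕ × ℕ)} {c : ℕ × ℕ} (hc : c ∈ S) {φ : Fml}
    (hφ : φ ∈ G.cellAtoms c) : φ ∈ G.cellCtx S := by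
  induction S with
  | nil => exact absurd hc List.not_mem_nil
  | cons d S ih =>
    rcases List.mem_cons.mp hc with rfl | hc
    · exact List.mem_append_left _ (List.mem_reverse.mpr hφ)
    · exact List.mem_append_right _ (ih hc)

theorem exists_cellVar_of_mem_fvCtx {S : List (ℕ × ℕ)} {y : ℕ}
    (hy : y ∈ fvCtx (G.cellCtx S)) :
    ∃ c ∈ S, y = cellVar c ∨ ∃ d ∈ prereq c, y = cellVar d := by
  induction S with
  | nil => simp [cellCtx, fvCtx_gammaG] at hy
  | cons c S ih =>
    rw [cellCtx, fvCtx_append, List.mem_append] at hy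
    rcases hy with hy | hy
    · have hy : y ∈ fvCtx (G.cellAtoms c) := by simpa [fvCtx] using hy
      exact ⟨c, List.mem_cons_self, G.mem_prereq_of_mem_fvCtx_cellAtoms hy⟩
    · obtain ⟨d, hd, h⟩ := ih hy
      exact ⟨d, List.mem_cons_of_mem _ hd, h⟩

theorem cellVar_not_mem_fvCtx {S : List (ℕ × ℕ)} (hS : DownClosed S) {c : ℕ × ℕ}
    (hc : c ∉ S) : cellVar c ∉ fvCtx (G.cellCtx S) := fun h => by
  obtain ⟨d, hd, h | ⟨e, he, h⟩⟩ := G.exists_cellVar_of_mem_fvCtx h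
  · exact hc (cellVar_injective h ▸ hd)
  · exact hc (cellVar_injective h ▸ hS d hd e he)

theorem zero_not_mem_fvCtx (S : List (ℕ × ℕ)) : 0 ∉ fvCtx (G.cellCtx S) := fun h => by
  obtain ⟨d, -, h | ⟨e, -, h⟩⟩ := G.exists_cellVar_of_mem_fvCtx h <;>
    exact absurd h (Nat.ne_of_lt (le_cellVar (by norm_num) _))

variable {G}

/-- By (5) it suffices to derive `pula` of the fresh variable of `c`, and the rule creating `c`
reduces that to `lupa` under the atoms of `c`. -/
theorem prov_lupa_of_cons {S : List (ℕ × ℕ)} (hS : DownClosed S) {c : ℕ × ℕ} (hc : c ∉ S)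
    (hc0 : c ≠ (0, 0)) (hpre : ∀ d ∈ prereq c, d ∈ S)
    (h : Prov (G.cellCtx (c :: S)) aLupa) :
    Prov (G.cellCtx S) aLupa := by
  have hpula : Prov (G.cellCtx S) (aPula (cellVar c)) := by
    refine (G.prov_cellRule (G.gammaG_subset_cellCtx S) hc0).imps_elim fun p hp => ?_
    rcases List.mem_append.mp hp with hp | hp
    · obtain ⟨d, hd, hpd⟩ := G.exists_prereq_of_mem_cellPremises hp
      exact Prov.ax (G.mem_cellCtx (hpre d hd) hpd)
    · rw [List.mem_singleton.mp hp]
      exact Prov.imps_intro h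
  have hall := Prov.allI_substV (G.cellVar_not_mem_fvCtx hS hc) (G.zero_not_mem_fvCtx S) hpula
  rw [show (aPula (cellVar c)).substV (cellVar c) 0 = aPula 0 by
    simp [aPula, Fml.substV, Fml.rename]] at hall
  exact Prov.impE (Prov.ax (G.gammaG_subset_cellCtx S fml5_mem_gammaG)) hall

theorem prov_lupa_of_append {S cs : List (ℕ × ℕ)} (hS : DownClosed S) (hcs : cs.Nodup)
    (hnew : ∀ c ∈ cs, c ∉ S ∧ c ≠ (0, 0) ∧ ∀ d ∈ prereq c, d ∈ S)
    (h : Prov (G.cellCtx (cs ++ S)) aLupa) : Prov (G.cellCtx S) aLupa := by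
  induction cs with
  | nil => exact h
  | cons c cs ih =>
    obtain ⟨hc, hcs⟩ := List.nodup_cons.mp hcs
    simp only [List.mem_cons, forall_eq_or_imp] at hnew
    obtain ⟨⟨hcS, hc0, hpre⟩, hnew⟩ := hnew
    refine ih hcs hnew (prov_lupa_of_cons (fun d hd e he => ?_) ?_ hc0
      (fun d hd => List.mem_append_right _ (hpre d hd)) h)
    · rcases List.mem_append.mp hd with hd | hd
      · exact List.mem_append_right _ ((hnew d hd).2.2 e he)
      · exact List.mem_append_right _ (hS d hd e he)
    · simpa [hc] using hcS

theorem prov_lupa_of_cellsBelow (w : ℕ) (h : Prov (G.cellCtx (cellsBelow (w + 1))) aLupa) :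
    Prov (G.cellCtx [(0, 0)]) aLupa := by
  induction w with
  | zero => exact h
  | succ w ih =>
    refine ih (prov_lupa_of_append (downClosed_cellsBelow _) (nodup_layer _) (fun c hc => ?_) h)
    have hc : weight c = w + 1 := mem_layer.mp hc
    refine ⟨fun h' => by simpa [hc] using mem_cellsBelow.mp h', ?_, fun d hd => ?_⟩
    · rintro rfl
      simp [weight] at hc
    · exact mem_cellsBelow.mpr (hc ▸ weight_lt_of_mem_prereq hd)

theorem prov_lupa_of_tiling_eq_ok {S : List (ℕ × ℕ)} {m n : ℕ} (hmn : (m, n) ∈ S)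
    (hok : G.tiling m n = G.ok) : Prov (G.cellCtx S) aLupa := by
  have hok : Prov (G.cellCtx S) (aTile G G.ok (cellVar (m, n))) :=
    Prov.ax (G.mem_cellCtx hmn (hok ▸ G.tile_mem_cellAtoms (m, n)))
  have h4 := Prov.instantiate_range [cellVar (m, n)]
    (by simp [le_cellVar]) (by simp [Fml.IsQuantifierFree, aTile, aLupa])
    (Prov.ax (G.gammaG_subset_cellCtx S fml4_mem_gammaG))
  exact Prov.impE h4 hok

theorem prov_start_of_origin (h : Prov (G.cellCtx [(0, 0)]) aLupa) : Prov (GammaG G) aStart := by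
  have hfresh : ∀ x, x ∉ fvCtx (GammaG G) := by simp [fvCtx_gammaG]
  have hall := Prov.allI_substV (hfresh (cellVar (0, 0))) (hfresh 0) (Prov.imps_intro h)
  rw [show (imps (G.cellAtoms (0, 0)) aLupa).substV (cellVar (0, 0)) 0 =
    imps [aTile G G.E 0, aA 0, aB 0] aLupa by
    simp [cellAtoms, imps, aTile, aA, aB, aLupa, Fml.substV, Fml.rename]] at hall
  exact Prov.impE (Prov.ax fml1_mem_gammaG) hall

end Puzzle

/-- Lemma 4.5 of the paper.  If the tiling puzzle `G` is
solvable then `Γ_G ⊢ start` is intuitionistically derivable. -/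
theorem solvable_implies_gammaG_start (G : Puzzle) :
    G.Solvable → Prov (GammaG G) aStart := by
  rintro ⟨m, n, hok⟩
  refine Puzzle.prov_start_of_origin (Puzzle.prov_lupa_of_cellsBelow (m + 2 * n) ?_)
  exact Puzzle.prov_lupa_of_tiling_eq_ok (Grid.mem_cellsBelow.mpr (by simp [Grid.weight])) hok
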